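/- arXiv:1411.5421 — 5 statements merged into one kernel-verified Lean document; each statement's English description precedes it below -/
import Mathlib

section
/- Let X be a bounded open subset of ℝ^N, let u : X → ℝ be a bounded Borel measurable function, and let δ, ε > 0. Then there exists a Borel measurable function σ : X → X such that for every x ∈ X, σ(x) ∈ B_ε(x) (the open ball of radius ε around x) and u(σ(x)) ≥ sup_{B_ε(x)∩X} u − δ. -/
open MeasureTheory Metric Set

/-- Borel almost-optimal sup-selection on open balls. -/
theorem borel_sup_selection {N : ℕ} (X : Set (EuclideanSpace ℝ (Fin N)))
    (hXo : IsOpen X) (hXb : Bornology.IsBounded X)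
    (u : EuclideanSpace ℝ (Fin N) → ℝ) (hu : Measurable u)
    (C : ℝ) (hub : ∀ x, |u x| ≤ C)
    (δ ε : ℝ) (hδ : 0 < δ) (hε : 0 < ε) :
    ∃ σ : EuclideanSpace ℝ (Fin N) → EuclideanSpace ℝ (Fin N),
      Measurable σ ∧ ∀ x ∈ X, σ x ∈ ball x ε ∩ X ∧
        sSup (u '' (ball x ε ∩ X)) - δ ≤ u (σ x) := by
  classical
  obtain rfl | ⟨x₀, hx₀⟩ := X.eq_empty_or_nonempty
  · exact ⟨id, measurable_id, fun x hx => absurd hx (notMem_empty x)⟩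
  set g : EuclideanSpace ℝ (Fin N) → ℝ := fun x => sSup (u '' (ball x ε ∩ X)) with hg
  have bdd : ∀ x, BddAbove (u '' (ball x ε ∩ X)) := fun x =>
    ⟨C, by rintro v ⟨y, -, rfl⟩; exact (abs_le.mp (hub y)).2⟩
  -- countable subcover for each rational level
  have cover : ∀ q : ℚ, ∃ Yq : Set (EuclideanSpace ℝ (Fin N)), Yq.Countable ∧
      (∀ y ∈ Yq, y ∈ X ∧ (q : ℝ) < u y) ∧
      (⋃ y : {y // y ∈ X ∧ (q : ℝ) < u y}, ball (y : EuclideanSpace ℝ (Fin N)) ε)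
        ⊆ ⋃ y ∈ Yq, ball y ε := by
    intro q
    obtain ⟨T, hTc, hTeq⟩ := TopologicalSpace.isOpen_iUnion_countable
      (fun y : {y // y ∈ X ∧ (q : ℝ) < u y} => ball (y : EuclideanSpace ℝ (Fin N)) ε)
      (fun _ => isOpen_ball)
    refine ⟨(↑) '' T, (hTc.image _), ?_, ?_⟩
    · rintro y ⟨z, -, rfl⟩; exact z.2
    · rw [← hTeq]
      intro x hx
      simp only [mem_iUnion] at hx ⊢
      obtain ⟨i, hiT, hxi⟩ := hx
      exact ⟨i, ⟨i, hiT, rfl⟩, hxi⟩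
  choose Yq hYc hYmem hYcov using cover
  -- the total countable set of candidate points
  set Y : Set (EuclideanSpace ℝ (Fin N)) := (⋃ q : ℚ, Yq q) ∪ {x₀} with hY
  have hYcount : Y.Countable := (countable_iUnion fun q => hYc q).union (countable_singleton x₀)
  have hYX : ∀ y ∈ Y, y ∈ X := by
    rintro y (hy | hy)
    · obtain ⟨q, hq⟩ := mem_iUnion.mp hy; exact (hYmem q y hq).1
    · rw [mem_singleton_iff.mp hy]; exact hx₀
  obtain ⟨c, hc⟩ := hYcount.exists_eq_range ⟨x₀, Or.inr rfl⟩
  have hcX : ∀ n, c n ∈ X := fun n => hYX _ (hc ▸ mem_range_self n)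
  -- the selection predicate
  set P : ℕ → EuclideanSpace ℝ (Fin N) → Prop :=
    fun n x => x ∈ ball (c n) ε ∧ g x ≤ u (c n) + δ with hP
  -- key measurability: the level set of g intersected with a ball around a point of X
  have key : ∀ n, {x | x ∈ ball (c n) ε ∧ u (c n) + δ < g x}
      = ball (c n) ε ∩ ⋃ y : {y // y ∈ X ∧ u (c n) + δ < u y}, ball (y : EuclideanSpace ℝ (Fin N)) ε := by
    intro n
    ext x
    simp only [mem_setOf_eq, mem_inter_iff, mem_iUnion]
    constructor
    · rintro ⟨hxb, hgx⟩
      have hne : (u '' (ball x ε ∩ X)).Nonempty :=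
        ⟨u (c n), mem_image_of_mem u ⟨mem_ball_comm.mp hxb, hcX n⟩⟩
      obtain ⟨v, hv, hltv⟩ := exists_lt_of_lt_csSup hne hgx
      obtain ⟨y, ⟨hyb, hyX⟩, rfl⟩ := hv
      exact ⟨hxb, ⟨⟨y, hyX, hltv⟩, mem_ball_comm.mp hyb⟩⟩
    · rintro ⟨hxb, ⟨y, hxy⟩⟩
      refine ⟨hxb, lt_of_lt_of_le y.2.2 (le_csSup (bdd x) ?_)⟩
      exact mem_image_of_mem u ⟨mem_ball_comm.mp hxy, y.2.1⟩
  have hPmeas : ∀ n, MeasurableSet {x | P n x} := by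
    intro n
    have h1 : {x | P n x} = ball (c n) ε \ {x | x ∈ ball (c n) ε ∧ u (c n) + δ < g x} := by
      ext x
      simp only [hP, mem_setOf_eq, mem_diff, not_and, not_lt]
      constructor
      · rintro ⟨h1, h2⟩; exact ⟨h1, fun _ => h2⟩
      · rintro ⟨h1, h2⟩; exact ⟨h1, h2 h1⟩
    rw [h1, key n]
    exact measurableSet_ball.diff
      (measurableSet_ball.inter (isOpen_iUnion fun _ => isOpen_ball).measurableSet)
  -- every point of X admits a good candidate
  have hex : ∀ x ∈ X, ∃ n, P n x := by
    intro x hx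
    obtain ⟨q, hq1, hq2⟩ := exists_rat_btwn (sub_lt_self (g x) hδ)
    have hne : (u '' (ball x ε ∩ X)).Nonempty :=
      ⟨u x, mem_image_of_mem u ⟨mem_ball_self hε, hx⟩⟩
    obtain ⟨v, hv, hltv⟩ := exists_lt_of_lt_csSup hne hq2
    obtain ⟨y, ⟨hyb, hyX⟩, rfl⟩ := hv
    have hxcov : x ∈ ⋃ z : {z // z ∈ X ∧ (q : ℝ) < u z}, ball (z : EuclideanSpace ℝ (Fin N)) ε := by
      exact mem_iUnion.mpr ⟨⟨y, hyX, hltv⟩, mem_ball_comm.mp hyb⟩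
    obtain ⟨z, hzY, hxz⟩ := by
      have := hYcov q hxcov
      simpa only [mem_iUnion, exists_prop] using this
    have hzY' : z ∈ Y := Or.inl (mem_iUnion.mpr ⟨q, hzY⟩)
    obtain ⟨n, rfl⟩ := by rw [hc] at hzY'; exact hzY'
    refine ⟨n, hxz, ?_⟩
    have : (q : ℝ) < u (c n) := (hYmem q _ hzY).2
    linarith
  -- extend the predicate so it is total
  set p : ℕ → EuclideanSpace ℝ (Fin N) → Prop :=
    fun n x => P n x ∨ ∀ m, ¬ P m x with hp
  have hptot : ∀ x, ∃ n, p n x := by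
    intro x
    by_cases h : ∃ n, P n x
    · exact ⟨h.choose, Or.inl h.choose_spec⟩
    · push_neg at h
      exact ⟨0, Or.inr h⟩
  have hpmeas : ∀ n, MeasurableSet {x | p n x} := by
    intro n
    have : {x | p n x} = {x | P n x} ∪ ⋂ m, {x | P m x}ᶜ := by
      ext x; simp [hp, mem_iUnion, forall_and]
    rw [this]
    exact (hPmeas n).union (MeasurableSet.iInter fun m => (hPmeas m).compl)
  refine ⟨fun x => c (Nat.find (hptot x)), ?_, ?_⟩
  · exact Measurable.find (fun n => measurable_const) hpmeas hptot
  · intro x hx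
    have hfind := Nat.find_spec (hptot x)
    have hPx : P (Nat.find (hptot x)) x := by
      rcases hfind with h | h
      · exact h
      · obtain ⟨n, hn⟩ := hex x hx
        exact absurd hn (h n)
    exact ⟨⟨mem_ball_comm.mp hPx.1, hcX _⟩, by have := hPx.2; simp only [hg] at this ⊢; linarith⟩
end

section
/- Let X be a bounded open subset of ℝ^N, u : X → ℝ bounded Borel, δ, ε > 0. Then there exists a Borel measurable function σ : X → X with σ(x) ∈ B_ε(x) and u(σ(x)) ≤ inf_{B_ε(x)∩X} u + δ for all x ∈ X. -/
/-!
Let `m x = inf {u y | y ∈ X, dist x y < ε}` and let `O c` be the `ε`-neighbourhood of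
`{y ∈ X | u y < c}`, so that `m x < c ↔ x ∈ O c` on `X`. By Lindelöf, countably many
centres `S ⊆ X` already produce every `O q`, `q ∈ ℚ`. A point `y ∈ S` is a `δ`-optimal
choice for every `x ∈ ball y ε \ O (u y - δ)`; these open-minus-open sets cover `X`,
and taking the first `y` of an enumeration of `S` whose set contains `x` is Borel.
-/

open MeasureTheory Metric Set

theorem exists_measurable_selection_of_countable {α β : Type*} [MeasurableSpace α]
    [MeasurableSpace β] [Nonempty β] {S : Set β} (hS : S.Countable) {A : β → Set α}
    (hA : ∀ y ∈ S, MeasurableSet (A y)) :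
    ∃ σ : α → β, Measurable σ ∧ ∀ x ∈ ⋃ y ∈ S, A y, σ x ∈ S ∧ x ∈ A (σ x) := by
  classical
  rcases S.eq_empty_or_nonempty with rfl | hne
  · exact ⟨fun _ => Classical.arbitrary β, measurable_const, by simp⟩
  obtain ⟨f, rfl⟩ := hS.exists_eq_range hne
  have hcov : ∀ x, ∃ n, x ∈ A (f n) ∨ x ∉ ⋃ k, A (f k) := by
    intro x
    by_cases hx : x ∈ ⋃ k, A (f k)
    · exact (mem_iUnion.mp hx).imp fun _ => Or.inl
    · exact ⟨0, Or.inr hx⟩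
  have hmeas : ∀ n, MeasurableSet {x | x ∈ A (f n) ∨ x ∉ ⋃ k, A (f k)} := fun n =>
    (hA _ (mem_range_self n)).union (MeasurableSet.iUnion fun k => hA _ (mem_range_self k)).compl
  refine ⟨fun x => f (Nat.find (hcov x)), measurable_from_nat.comp (measurable_find hcov hmeas),
    fun x hx => ⟨mem_range_self _, ?_⟩⟩
  rw [biUnion_range] at hx
  exact (Nat.find_spec (hcov x)).resolve_right (not_not.mpr hx)

section NearSublevel

variable {α : Type*} [PseudoMetricSpace α]

def nearSublevel (X : Set α) (u : α → ℝ) (ε c : ℝ) : Set α :=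
  ⋃ y ∈ X ∩ u ⁻¹' Iio c, ball y ε

variable {X : Set α} {u : α → ℝ} {ε c : ℝ} {x : α}

theorem isOpen_nearSublevel : IsOpen (nearSublevel X u ε c) :=
  isOpen_biUnion fun _ _ => isOpen_ball

theorem nearSublevel_mono {Y : Set α} (h : X ⊆ Y) : nearSublevel X u ε c ⊆ nearSublevel Y u ε c :=
  biUnion_subset_biUnion_left (inter_subset_inter_left _ h)

theorem mem_nearSublevel_of_sInf_lt (hx : x ∈ X) (hε : 0 < ε)
    (h : sInf (u '' (ball x ε ∩ X)) < c) : x ∈ nearSublevel X u ε c := by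
  have hne : (u '' (ball x ε ∩ X)).Nonempty := ⟨u x, mem_image_of_mem u ⟨mem_ball_self hε, hx⟩⟩
  obtain ⟨_, ⟨y, ⟨hxy, hy⟩, rfl⟩, hyc⟩ := exists_lt_of_csInf_lt hne h
  exact mem_biUnion (x := y) ⟨hy, hyc⟩ (mem_ball_comm.mp hxy)

theorem sInf_lt_of_mem_nearSublevel (hbdd : BddBelow (u '' X)) (h : x ∈ nearSublevel X u ε c) :
    sInf (u '' (ball x ε ∩ X)) < c := by
  obtain ⟨y, ⟨hy, hyc⟩, hxy⟩ := mem_iUnion₂.mp h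
  exact (csInf_le (hbdd.mono (image_mono inter_subset_right))
    ⟨y, ⟨mem_ball_comm.mp hxy, hy⟩, rfl⟩).trans_lt hyc

theorem exists_countable_nearSublevel_eq [SecondCountableTopology α] (X : Set α) (u : α → ℝ)
    (ε : ℝ) : ∃ S ⊆ X, S.Countable ∧ ∀ q : ℚ, nearSublevel S u ε q = nearSublevel X u ε q := by
  choose T hTX hTc hTeq using fun q : ℚ =>
    TopologicalSpace.isOpen_biUnion_countable (X ∩ u ⁻¹' Iio q) (fun y => ball y ε)
      fun _ _ => isOpen_ball
  have hTX' : ⋃ q, T q ⊆ X := iUnion_subset fun q => (hTX q).trans inter_subset_left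
  refine ⟨⋃ q, T q, hTX', countable_iUnion hTc, fun q => (nearSublevel_mono hTX').antisymm ?_⟩
  rw [nearSublevel, ← hTeq q]
  exact biUnion_mono (fun y hy => ⟨mem_iUnion_of_mem q hy, (hTX q hy).2⟩) fun _ _ => le_rfl

theorem exists_measurable_inf_selection [SecondCountableTopology α] [MeasurableSpace α]
    [OpensMeasurableSpace α] (X : Set α) (u : α → ℝ) (hbdd : BddBelow (u '' X)) {δ ε : ℝ}
    (hδ : 0 < δ) (hε : 0 < ε) :
    ∃ σ : α → α, Measurable σ ∧ ∀ x ∈ X, σ x ∈ ball x ε ∩ X ∧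
      u (σ x) ≤ sInf (u '' (ball x ε ∩ X)) + δ := by
  rcases isEmpty_or_nonempty α with _ | _
  · exact ⟨id, measurable_id, fun x => isEmptyElim x⟩
  obtain ⟨S, hSX, hSc, hSeq⟩ := exists_countable_nearSublevel_eq X u ε
  obtain ⟨σ, hσm, hσ⟩ := exists_measurable_selection_of_countable hSc
    (A := fun y => ball y ε \ nearSublevel X u ε (u y - δ))
    fun y _ => measurableSet_ball.diff isOpen_nearSublevel.measurableSet
  refine ⟨σ, hσm, fun x hx => ?_⟩
  have hcover : x ∈ ⋃ y ∈ S, ball y ε \ nearSublevel X u ε (u y - δ) := by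
    obtain ⟨q, hmq, hqm⟩ := exists_rat_btwn (lt_add_of_pos_right (sInf (u '' (ball x ε ∩ X))) hδ)
    have hxq := hSeq q ▸ mem_nearSublevel_of_sInf_lt hx hε hmq
    obtain ⟨y, ⟨hyS, hyq⟩, hxy⟩ := mem_iUnion₂.mp hxq
    refine mem_biUnion hyS ⟨hxy, fun hxy' => ?_⟩
    have := sInf_lt_of_mem_nearSublevel hbdd hxy'
    simp only [mem_preimage, mem_Iio] at hyq
    linarith
  obtain ⟨hσS, hxσ, hσopt⟩ := hσ x hcover
  refine ⟨⟨mem_ball_comm.mp hxσ, hSX hσS⟩, ?_⟩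
  have := mt (mem_nearSublevel_of_sInf_lt hx hε) hσopt
  linarith

end NearSublevel

theorem borel_inf_selection_general {N : ℕ} (X : Set (EuclideanSpace ℝ (Fin N)))
    (u : EuclideanSpace ℝ (Fin N) → ℝ)
    (C : ℝ) (hub : ∀ x, |u x| ≤ C)
    (δ ε : ℝ) (hδ : 0 < δ) (hε : 0 < ε) :
    ∃ σ : EuclideanSpace ℝ (Fin N) → EuclideanSpace ℝ (Fin N),
      Measurable σ ∧ ∀ x ∈ X, σ x ∈ ball x ε ∩ X ∧
        u (σ x) ≤ sInf (u '' (ball x ε ∩ X)) + δ :=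
  exists_measurable_inf_selection X u ⟨-C, by rintro _ ⟨y, -, rfl⟩; exact neg_le_of_abs_le (hub y)⟩
    hδ hε

/-- Borel almost-optimal inf-selection on open balls. -/
theorem borel_inf_selection {N : ℕ} (X : Set (EuclideanSpace ℝ (Fin N)))
    (hXo : IsOpen X) (hXb : Bornology.IsBounded X)
    (u : EuclideanSpace ℝ (Fin N) → ℝ) (hu : Measurable u)
    (C : ℝ) (hub : ∀ x, |u x| ≤ C)
    (δ ε : ℝ) (hδ : 0 < δ) (hε : 0 < ε) :
    ∃ σ : EuclideanSpace ℝ (Fin N) → EuclideanSpace ℝ (Fin N),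
      Measurable σ ∧ ∀ x ∈ X, σ x ∈ ball x ε ∩ X ∧
        u (σ x) ≤ sInf (u '' (ball x ε ∩ X)) + δ :=
  borel_inf_selection_general X u C hub δ ε hδ hε
end

section
/- Let Ω ⊂ ℝ^N be open and bounded, Γ = {x ∉ Ω : dist(x,Ω) < ε₀}, X = Ω ∪ Γ, and fix 0 < ε ≤ ε₀. Let α ∈ [0,1), β = 1 − α, and let F : Γ → ℝ and Ψ : ℝ^N → ℝ be bounded Borel functions with Ψ ≤ F on Γ. Define the operator T on bounded Borel functions v : X → ℝ by (Tv)(x) = max{Ψ(x), (α/2) sup_{B_ε(x)} v + (α/2) inf_{B_ε(x)} v + β ⨍_{B_ε(x)} v} for x ∈ Ω and (Tv)(x) = v(x) for x ∈ Γ. With u₀ = F·χ_Γ + (inf_X Ψ)·χ_Ω, the iterates u_{n+1} = T u_n form a nondecreasing sequence of bounded Borel functions on X. -/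
open MeasureTheory Metric Set Classical

/-!
`dppT` is monotone at every point of `X`: sup, inf and average over a ball are monotone, the
weights `α/2, α/2, 1 - α` are nonnegative, and `B_ε(x) ⊆ X` for `x ∈ Ω` because `ε ≤ ε₀`.
Since `u₀ = inf_X Ψ ≤ Ψ` on `Ω` and `dppT` is the identity off `Ω`, we have `u₀ ≤ u₁`, and
monotonicity propagates `uₙ ≤ uₙ₊₁`. Once `|Ψ| ≤ C`, `dppT` maps Borel functions with values in
`[-C, C]` to such functions: sup and inf over open balls are semicontinuous in the centre, and the
ball average is measurable by Fubini and the translation invariance of Lebesgue measure.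
-/

/-- The obstacle dynamic programming operator. -/
noncomputable def dppT {N : ℕ} (Ω : Set (EuclideanSpace ℝ (Fin N)))
    (Ψ : EuclideanSpace ℝ (Fin N) → ℝ) (α β ε : ℝ)
    (v : EuclideanSpace ℝ (Fin N) → ℝ) : EuclideanSpace ℝ (Fin N) → ℝ :=
  fun x => if x ∈ Ω then
      max (Ψ x) (α / 2 * sSup (v '' ball x ε) + α / 2 * sInf (v '' ball x ε)
        + β * ⨍ y in ball x ε, v y)
    else v x

section SupInfOverBalls

variable {α β : Type*} [PseudoMetricSpace α] [ConditionallyCompleteLinearOrder β]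
  {v : α → β} {ε : ℝ}

theorem lowerSemicontinuous_sSup_image_ball (hv : BddAbove (range v)) (hε : 0 < ε) :
    LowerSemicontinuous fun x => sSup (v '' ball x ε) := by
  intro x t ht
  obtain ⟨_, ⟨y, hy, rfl⟩, hty⟩ :=
    exists_lt_of_lt_csSup ((nonempty_ball.2 hε).image v) ht
  filter_upwards [isOpen_ball.mem_nhds (mem_ball_comm.1 hy)] with z hz
  exact hty.trans_le (le_csSup (hv.mono (image_subset_range _ _))
    (mem_image_of_mem v (mem_ball_comm.1 hz)))

theorem upperSemicontinuous_sInf_image_ball (hv : BddBelow (range v)) (hε : 0 < ε) :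
    UpperSemicontinuous fun x => sInf (v '' ball x ε) :=
  lowerSemicontinuous_sSup_image_ball (β := βᵒᵈ) hv hε

end SupInfOverBalls

theorem stronglyMeasurable_setIntegral_ball {α E : Type*} [PseudoMetricSpace α]
    [SecondCountableTopology α] [MeasurableSpace α] [OpensMeasurableSpace α]
    [NormedAddCommGroup E] [NormedSpace ℝ E] (μ : Measure α) [SFinite μ] {v : α → E}
    (hv : StronglyMeasurable v) (ε : ℝ) :
    StronglyMeasurable fun x => ∫ y in ball x ε, v y ∂μ := by
  have hball : MeasurableSet {p : α × α | dist p.2 p.1 < ε} :=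
    measurableSet_lt (measurable_snd.dist measurable_fst) measurable_const
  convert ((hv.comp_measurable measurable_snd).indicator hball).integral_prod_right' (ν := μ)
    using 2 with x
  rw [← integral_indicator measurableSet_ball]
  rfl

theorem stronglyMeasurable_setAverage_ball {E F : Type*} [NormedAddCommGroup E]
    [NormedSpace ℝ E] [FiniteDimensional ℝ E] [MeasurableSpace E] [BorelSpace E]
    [NormedAddCommGroup F] [NormedSpace ℝ F] (μ : Measure E) [μ.IsAddHaarMeasure] {v : E → F}
    (hv : StronglyMeasurable v) (ε : ℝ) :
    StronglyMeasurable fun x => ⨍ y in ball x ε, v y ∂μ := by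
  simp_rw [setAverage_eq, Measure.real, μ.addHaar_ball_center]
  exact (stronglyMeasurable_setIntegral_ball μ hv ε).const_smul _

section ImageOrder

variable {α β : Type*} [ConditionallyCompleteLinearOrder β] {s : Set α} {v w : α → β}

theorem csSup_image_le_csSup_image (hs : s.Nonempty) (hw : BddAbove (w '' s))
    (h : ∀ x ∈ s, v x ≤ w x) : sSup (v '' s) ≤ sSup (w '' s) :=
  csSup_le (hs.image v) <| forall_mem_image.2 fun x hx =>
    (h x hx).trans (le_csSup hw (mem_image_of_mem w hx))

theorem csInf_image_le_csInf_image (hs : s.Nonempty) (hv : BddBelow (v '' s))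
    (h : ∀ x ∈ s, v x ≤ w x) : sInf (v '' s) ≤ sInf (w '' s) :=
  csSup_image_le_csSup_image (β := βᵒᵈ) hs hv h

variable [TopologicalSpace β] [OrderTopology β] {a b : β}

theorem csSup_image_mem_Icc (hs : s.Nonempty) (hv : MapsTo v s (Icc a b)) :
    sSup (v '' s) ∈ Icc a b :=
  closure_minimal hv.image_subset isClosed_Icc <|
    csSup_mem_closure (hs.image v) (bddAbove_Icc.mono hv.image_subset)

theorem csInf_image_mem_Icc (hs : s.Nonempty) (hv : MapsTo v s (Icc a b)) :
    sInf (v '' s) ∈ Icc a b :=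
  closure_minimal hv.image_subset isClosed_Icc <|
    csInf_mem_closure (hs.image v) (bddBelow_Icc.mono hv.image_subset)

end ImageOrder

theorem setAverage_mono_on {α : Type*} [MeasurableSpace α] {μ : Measure α} {s : Set α}
    {f g : α → ℝ} (hs : MeasurableSet s) (hf : IntegrableOn f s μ) (hg : IntegrableOn g s μ)
    (h : ∀ x ∈ s, f x ≤ g x) : ⨍ x in s, f x ∂μ ≤ ⨍ x in s, g x ∂μ := by
  simp only [setAverage_eq]
  exact smul_le_smul_of_nonneg_left (setIntegral_mono_on hf hg hs h) (by positivity)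

theorem ball_subset_union_setOf_infDist_lt {α : Type*} [PseudoMetricSpace α] {Ω : Set α}
    {x : α} {ε ε₀ : ℝ} (hx : x ∈ Ω) (hεε₀ : ε ≤ ε₀) :
    ball x ε ⊆ Ω ∪ {y | y ∉ Ω ∧ infDist y Ω < ε₀} := by
  intro y hy
  by_cases hyΩ : y ∈ Ω
  · exact Or.inl hyΩ
  · exact Or.inr ⟨hyΩ, (infDist_le_dist_of_mem hx).trans_lt (hy.trans_le hεε₀)⟩

section Dpp

variable {N : ℕ} {Ω X : Set (EuclideanSpace ℝ (Fin N))} {Ψ v w : EuclideanSpace ℝ (Fin N) → ℝ}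
  {α β ε a b : ℝ} {x : EuclideanSpace ℝ (Fin N)}

theorem integrableOn_ball_of_mem_Icc (hv : Measurable v) (hvI : ∀ x, v x ∈ Icc a b) :
    IntegrableOn v (ball x ε) :=
  Measure.integrableOn_of_bounded (M := max |a| |b|) measure_ball_lt_top.ne
    hv.aestronglyMeasurable (ae_of_all _ fun y => abs_le_max_abs_abs (hvI y).1 (hvI y).2)

theorem setAverage_ball_mem_Icc (hε : 0 < ε) (hv : Measurable v) (hvI : ∀ x, v x ∈ Icc a b) :
    ⨍ y in ball x ε, v y ∈ Icc a b :=
  (convex_Icc a b).set_average_mem isClosed_Icc (measure_ball_pos volume x hε).ne'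
    measure_ball_lt_top.ne (ae_of_all _ fun y => hvI y) (integrableOn_ball_of_mem_Icc hv hvI)

theorem dppT_of_notMem (hx : x ∉ Ω) : dppT Ω Ψ α β ε v x = v x := if_neg hx

theorem le_dppT (h : ∀ x ∈ Ω, v x ≤ Ψ x) : v x ≤ dppT Ω Ψ α β ε v x := by
  by_cases hx : x ∈ Ω
  · rw [dppT, if_pos hx]
    exact (h x hx).trans (le_max_left _ _)
  · rw [dppT_of_notMem hx]

theorem measurable_dppT (hΩ : MeasurableSet Ω) (hΨ : Measurable Ψ) (hε : 0 < ε)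
    (hv : Measurable v) (hvI : ∀ x, v x ∈ Icc a b) : Measurable (dppT Ω Ψ α β ε v) := by
  have hrange : range v ⊆ Icc a b := range_subset_iff.2 hvI
  have hsup := (lowerSemicontinuous_sSup_image_ball (bddAbove_Icc.mono hrange) hε).measurable
  have hinf := (upperSemicontinuous_sInf_image_ball (bddBelow_Icc.mono hrange) hε).measurable
  have havg := (stronglyMeasurable_setAverage_ball volume hv.stronglyMeasurable ε).measurable
  exact Measurable.ite hΩ (hΨ.max (((hsup.const_mul _).add (hinf.const_mul _)).add
    (havg.const_mul _))) hv

theorem dppT_mem_Icc (hα : α ∈ Icc (0 : ℝ) 1) (hε : 0 < ε) (hv : Measurable v)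
    (hΨI : ∀ x, Ψ x ∈ Icc a b) (hvI : ∀ x, v x ∈ Icc a b) :
    dppT Ω Ψ α (1 - α) ε v x ∈ Icc a b := by
  by_cases hx : x ∈ Ω
  · obtain ⟨hs₁, hs₂⟩ := csSup_image_mem_Icc ⟨x, mem_ball_self hε⟩ fun y _ => hvI y
    obtain ⟨hi₁, hi₂⟩ := csInf_image_mem_Icc ⟨x, mem_ball_self hε⟩ fun y _ => hvI y
    obtain ⟨hm₁, hm₂⟩ := setAverage_ball_mem_Icc hε hv hvI (x := x)
    obtain ⟨hα₀, hα₁⟩ := hα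
    rw [dppT, if_pos hx]
    exact ⟨le_max_of_le_left (hΨI x).1,
      max_le (hΨI x).2 (by nlinarith)⟩
  · rw [dppT_of_notMem hx]
    exact hvI x

theorem dppT_le_dppT (hα : 0 ≤ α) (hβ : 0 ≤ β) (hε : 0 < ε) (hv : Measurable v)
    (hw : Measurable w) (hvI : ∀ x, v x ∈ Icc a b) (hwI : ∀ x, w x ∈ Icc a b)
    (hΩX : ∀ x ∈ Ω, ball x ε ⊆ X) (hvw : ∀ y ∈ X, v y ≤ w y) (hx : x ∈ X) :
    dppT Ω Ψ α β ε v x ≤ dppT Ω Ψ α β ε w x := by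
  by_cases hxΩ : x ∈ Ω
  · have hle : ∀ y ∈ ball x ε, v y ≤ w y := fun y hy => hvw y (hΩX x hxΩ hy)
    have hne : (ball x ε).Nonempty := nonempty_ball.2 hε
    have hsup : sSup (v '' ball x ε) ≤ sSup (w '' ball x ε) :=
      csSup_image_le_csSup_image hne
        (bddAbove_Icc.mono (MapsTo.image_subset fun y _ => hwI y)) hle
    have hinf : sInf (v '' ball x ε) ≤ sInf (w '' ball x ε) :=
      csInf_image_le_csInf_image hne
        (bddBelow_Icc.mono (MapsTo.image_subset fun y _ => hvI y)) hle
    have havg : ⨍ y in ball x ε, v y ≤ ⨍ y in ball x ε, w y :=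
      setAverage_mono_on measurableSet_ball (integrableOn_ball_of_mem_Icc hv hvI)
        (integrableOn_ball_of_mem_Icc hw hwI) hle
    simp only [dppT, if_pos hxΩ]
    gcongr
  · simp only [dppT_of_notMem hxΩ]
    exact hvw x hx

variable {u : ℕ → EuclideanSpace ℝ (Fin N) → ℝ}

theorem iterate_dppT_measurable_mem_Icc (hα : α ∈ Icc (0 : ℝ) 1) (hε : 0 < ε)
    (hΩ : MeasurableSet Ω) (hΨ : Measurable Ψ) (hΨI : ∀ x, Ψ x ∈ Icc a b)
    (huS : ∀ n, u (n + 1) = dppT Ω Ψ α (1 - α) ε (u n)) (hu₀ : Measurable (u 0))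
    (hu₀I : ∀ x, u 0 x ∈ Icc a b) (n : ℕ) : Measurable (u n) ∧ ∀ x, u n x ∈ Icc a b := by
  induction n with
  | zero => exact ⟨hu₀, hu₀I⟩
  | succ n ih =>
    rw [huS]
    exact ⟨measurable_dppT hΩ hΨ hε ih.1 ih.2, fun x => dppT_mem_Icc hα hε ih.1 hΨI ih.2⟩

theorem iterate_dppT_le_succ (hα : α ∈ Icc (0 : ℝ) 1) (hε : 0 < ε)
    (huS : ∀ n, u (n + 1) = dppT Ω Ψ α (1 - α) ε (u n))
    (hu : ∀ n, Measurable (u n) ∧ ∀ x, u n x ∈ Icc a b) (hΩX : ∀ x ∈ Ω, ball x ε ⊆ X)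
    (hu₀₁ : ∀ x ∈ X, u 0 x ≤ u 1 x) (n : ℕ) : ∀ x ∈ X, u n x ≤ u (n + 1) x := by
  induction n with
  | zero => exact hu₀₁
  | succ n ih =>
    intro x hx
    simpa only [← huS] using dppT_le_dppT (Ψ := Ψ) hα.1 (sub_nonneg.2 hα.2) hε (hu n).1
      (hu (n + 1)).1 (hu n).2 (hu (n + 1)).2 hΩX ih hx

end Dpp

theorem dpp_iterates_monotone_general {N : ℕ} (Ω : Set (EuclideanSpace ℝ (Fin N)))
    (hΩo : IsOpen Ω)
    (ε₀ ε α : ℝ) (hε : 0 < ε) (hεε₀ : ε ≤ ε₀)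
    (hα : α ∈ Set.Ico (0:ℝ) 1)
    (Γ : Set (EuclideanSpace ℝ (Fin N)))
    (hΓ : Γ = {x | x ∉ Ω ∧ Metric.infDist x Ω < ε₀})
    (X : Set (EuclideanSpace ℝ (Fin N))) (hX : X = Ω ∪ Γ)
    (F Ψ : EuclideanSpace ℝ (Fin N) → ℝ) (hF : Measurable F) (hΨ : Measurable Ψ)
    (CF CΨ : ℝ) (hFb : ∀ x, |F x| ≤ CF) (hΨb : ∀ x, |Ψ x| ≤ CΨ)
    (u : ℕ → EuclideanSpace ℝ (Fin N) → ℝ)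
    (hu0 : ∀ x, u 0 x = if x ∈ Γ then F x else sInf (Ψ '' X))
    (huS : ∀ n, u (n + 1) = dppT Ω Ψ α (1 - α) ε (u n)) :
    (∀ n, Measurable (u n) ∧ ∃ C, ∀ x ∈ X, |u n x| ≤ C) ∧
    (∀ n, ∀ x ∈ X, u n x ≤ u (n + 1) x) := by
  have hα' : α ∈ Icc (0 : ℝ) 1 := Ico_subset_Icc_self hα
  set C := max CΨ (max CF |sInf (Ψ '' X)|)
  have hΨI : ∀ x, Ψ x ∈ Icc (-C) C := fun x => abs_le.1 ((hΨb x).trans (le_max_left _ _))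
  have hΓm : MeasurableSet Γ := hΓ ▸ hΩo.measurableSet.compl.inter
    (measurableSet_lt (continuous_infDist_pt Ω).measurable measurable_const)
  have hu₀I : ∀ x, u 0 x ∈ Icc (-C) C := fun x => by
    rw [hu0, mem_Icc, ← abs_le]
    split_ifs
    · exact (hFb x).trans (le_max_of_le_right (le_max_left _ _))
    · exact le_max_of_le_right (le_max_right _ _)
  have hu := iterate_dppT_measurable_mem_Icc hα' hε hΩo.measurableSet hΨ hΨI huS
    (funext hu0 ▸ hF.ite hΓm measurable_const) hu₀I
  have hu₀₁ : ∀ x ∈ X, u 0 x ≤ u 1 x := fun x _ => by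
    rw [huS]
    refine le_dppT fun y hy => ?_
    rw [hu0, if_neg (by rw [hΓ]; exact fun h => h.1 hy)]
    exact csInf_le (bddBelow_Icc.mono (MapsTo.image_subset fun y _ => hΨI y))
      (mem_image_of_mem Ψ (hX ▸ Or.inl hy))
  have hΩX : ∀ x ∈ Ω, ball x ε ⊆ X := fun x hx =>
    hX ▸ hΓ ▸ ball_subset_union_setOf_infDist_lt hx hεε₀
  exact ⟨fun n => ⟨(hu n).1, C, fun x _ => abs_le.2 ((hu n).2 x)⟩,
    iterate_dppT_le_succ hα' hε huS hu hΩX hu₀₁⟩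

/-- The Perron iterates of the obstacle DPP operator form a nondecreasing
sequence of bounded Borel functions on `X`. -/
theorem dpp_iterates_monotone {N : ℕ} (Ω : Set (EuclideanSpace ℝ (Fin N)))
    (hΩo : IsOpen Ω) (hΩb : Bornology.IsBounded Ω)
    (ε₀ ε α : ℝ) (hε₀ : 0 < ε₀) (hε : 0 < ε) (hεε₀ : ε ≤ ε₀)
    (hα : α ∈ Set.Ico (0:ℝ) 1)
    (Γ : Set (EuclideanSpace ℝ (Fin N)))
    (hΓ : Γ = {x | x ∉ Ω ∧ Metric.infDist x Ω < ε₀})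
    (X : Set (EuclideanSpace ℝ (Fin N))) (hX : X = Ω ∪ Γ)
    (F Ψ : EuclideanSpace ℝ (Fin N) → ℝ) (hF : Measurable F) (hΨ : Measurable Ψ)
    (CF CΨ : ℝ) (hFb : ∀ x, |F x| ≤ CF) (hΨb : ∀ x, |Ψ x| ≤ CΨ)
    (hΨF : ∀ x ∈ Γ, Ψ x ≤ F x)
    (u : ℕ → EuclideanSpace ℝ (Fin N) → ℝ)
    (hu0 : ∀ x, u 0 x = if x ∈ Γ then F x else sInf (Ψ '' X))
    (huS : ∀ n, u (n + 1) = dppT Ω Ψ α (1 - α) ε (u n)) :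
    (∀ n, Measurable (u n) ∧ ∃ C, ∀ x ∈ X, |u n x| ≤ C) ∧
    (∀ n, ∀ x ∈ X, u n x ≤ u (n + 1) x) :=
  dpp_iterates_monotone_general Ω hΩo ε₀ ε α hε hεε₀ hα Γ hΓ X hX F Ψ hF hΨ CF CΨ hFb hΨb u hu0 huS
end

section
/- Let φ ∈ C²(Ω), x ∈ Ω with B̄_ε(x) ⊂ Ω, and let x̄_ε ∈ argmin_{B̄_ε(x)} φ. Then max_{B̄_ε(x)} φ + min_{B̄_ε(x)} φ − 2φ(x) ≥ ⟨D²φ(x)(x̄_ε − x), (x̄_ε − x)⟩ + o(ε²) as ε → 0⁺. -/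
/-!
Write `h = x̄_ε - x`, so `‖h‖ ≤ ε`. The reflected point `x - h` also lies in `B̄_ε(x)`, hence
`max + min - 2φ(x) ≥ φ(x - h) + φ(x + h) - 2φ(x)`. In the second-order Taylor expansions of
`φ(x ± h)` the first-order terms cancel, leaving `D²φ(x)(h, h)` plus two remainders, each
`o(‖h‖²) = o(ε²)`.
-/

open Metric Set Filter Topology Asymptotics

theorem Asymptotics.IsLittleO.comp_of_norm_le_self {E F : Type*} [NormedAddCommGroup E]
    [NormedAddCommGroup F] {f : E → F} {n : ℕ} (hf : f =o[𝓝 0] fun h => ‖h‖ ^ n) {u : ℝ → E}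
    (hu : ∀ᶠ ε in 𝓝[>] 0, ‖u ε‖ ≤ ε) :
    (fun ε => f (u ε)) =o[𝓝[>] 0] fun ε => ε ^ n := by
  have hu_lim : Tendsto u (𝓝[>] 0) (𝓝 0) := squeeze_zero_norm' hu nhdsWithin_le_nhds
  refine (hf.comp_tendsto hu_lim).trans_isBigO (IsBigO.of_bound 1 ?_)
  filter_upwards [hu, self_mem_nhdsWithin] with ε hε hpos
  simp only [Function.comp_apply, norm_pow, Real.norm_of_nonneg (le_of_lt hpos), one_mul]
  gcongr
  rwa [_root_.norm_norm]

theorem IsMinOn.add_le_csSup_add_csInf {α : Type*} {S : Set α} {φ : α → ℝ} {a b : α}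
    (hmin : IsMinOn φ S a) (ha : a ∈ S) (hb : b ∈ S) (hbdd : BddAbove (φ '' S)) :
    φ b + φ a ≤ sSup (φ '' S) + sInf (φ '' S) := by
  rw [IsLeast.csInf_eq ⟨mem_image_of_mem φ ha, forall_mem_image.2 hmin⟩]
  exact add_le_add_left (le_csSup hbdd (mem_image_of_mem φ hb)) _

section SecondOrderTaylor

variable {E F : Type*} [NormedAddCommGroup E] [NormedSpace ℝ E]
  [NormedAddCommGroup F] [NormedSpace ℝ F]

theorem ContinuousLinearMap.hasFDerivAt_half_apply_self {B : E →L[ℝ] E →L[ℝ] F}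
    (hB : ∀ v w, B v w = B w v) (z : E) :
    HasFDerivAt (fun h => (1 / 2 : ℝ) • B h h) (B z) z := by
  refine ((B.hasFDerivAt_of_bilinear (hasFDerivAt_id z) (hasFDerivAt_id z)).const_smul
    (1 / 2 : ℝ)).congr_fderiv ?_
  ext w
  simp only [precompR_apply, precompL_apply, compL_apply, add_apply, smul_apply, comp_id,
    id_apply, id_eq, hB w z]
  module

noncomputable def secondOrderTaylorRemainder (f : E → F) (x h : E) : F :=
  f (x + h) - f x - fderiv ℝ f x h - (1 / 2 : ℝ) • fderiv ℝ (fderiv ℝ f) x h h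

theorem secondOrderTaylorRemainder_add_neg (f : E → F) (x h : E) :
    secondOrderTaylorRemainder f x h + secondOrderTaylorRemainder f x (-h) =
      f (x + h) + f (x + -h) - (2 : ℝ) • f x - fderiv ℝ (fderiv ℝ f) x h h := by
  simp only [secondOrderTaylorRemainder, map_neg, neg_apply, neg_neg]
  module

/-- By the symmetry of `f''`, the function `h ↦ f (x + h) - f' x h - f'' h h / 2` has derivative
`f' (x + h) - f' x - f'' h = o(‖h‖)`, which the mean value inequality integrates to `o(‖h‖²)`. -/
theorem ContDiffAt.isLittleO_secondOrderTaylorRemainder {f : E → F} {x : E}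
    (hf : ContDiffAt ℝ 2 f x) :
    secondOrderTaylorRemainder f x =o[𝓝 0] fun h => ‖h‖ ^ 2 := by
  set B := fderiv ℝ (fderiv ℝ f) x
  have hB : HasFDerivAt (fderiv ℝ f) B x :=
    ((hf.fderiv_right (m := 1) (by norm_num)).differentiableAt one_ne_zero).hasFDerivAt
  have hsymm : ∀ v w, B v w = B w v := hf.isSymmSndFDerivAt (by simp)
  obtain ⟨r, hr, hdiff⟩ := Metric.eventually_nhds_iff_ball.1 (hf.eventually (by simp))
  have hderiv : ∀ h ∈ ball (0 : E) r, HasFDerivWithinAt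
      (fun h => f (x + h) - fderiv ℝ f x h - (1 / 2 : ℝ) • B h h)
      (fderiv ℝ f (x + h) - fderiv ℝ f x - B h) (ball 0 r) h := by
    intro h hh
    have hxh : x + h ∈ ball x r := by simpa using hh
    have hfx : HasFDerivAt (fun h => f (x + h)) (fderiv ℝ f (x + h)) h :=
      (hasFDerivAt_comp_add_left x).2 ((hdiff _ hxh).differentiableAt two_ne_zero).hasFDerivAt
    exact ((hfx.sub (fderiv ℝ f x).hasFDerivAt).sub
      (ContinuousLinearMap.hasFDerivAt_half_apply_self hsymm h)).hasFDerivWithinAt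
  have hderiv_small : (fun h => fderiv ℝ f (x + h) - fderiv ℝ f x - B h) =o[𝓝[ball 0 r] 0]
      fun h => ‖h - 0‖ ^ 1 := by
    simpa using (hasFDerivAt_iff_isLittleO_nhds_zero.1 hB).norm_right.mono nhdsWithin_le_nhds
  have hg := (convex_ball (0 : E) r).isLittleO_pow_succ (mem_ball_self hr) hderiv hderiv_small
  rw [nhdsWithin_eq_nhds.2 (ball_mem_nhds 0 hr)] at hg
  convert hg using 2 with h
  · simp only [secondOrderTaylorRemainder, add_zero, map_zero, smul_zero, sub_zero]
    abel
  · simp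

end SecondOrderTaylor

theorem iteratedFDeriv_two_sub_csSup_add_csInf_le {E : Type*} [NormedAddCommGroup E]
    [NormedSpace ℝ E] {φ : E → ℝ} {x y : E} {ε : ℝ}
    (hy : y ∈ closedBall x ε) (hmin : IsMinOn φ (closedBall x ε) y)
    (hbdd : BddAbove (φ '' closedBall x ε)) :
    iteratedFDeriv ℝ 2 φ x ![y - x, y - x]
        - (sSup (φ '' closedBall x ε) + sInf (φ '' closedBall x ε) - 2 * φ x) ≤
      ‖secondOrderTaylorRemainder φ x (y - x)‖ + ‖secondOrderTaylorRemainder φ x (-(y - x))‖ := by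
  have hreflect : x + -(y - x) ∈ closedBall x ε := by
    simpa [dist_eq_norm, norm_sub_rev] using hy
  have hsum := hmin.add_le_csSup_add_csInf hy hreflect hbdd
  have hsymm := secondOrderTaylorRemainder_add_neg φ x (y - x)
  rw [add_sub_cancel, smul_eq_mul] at hsymm
  rw [iteratedFDeriv_two_apply]
  simp only [Matrix.cons_val_zero, Matrix.cons_val_one, Real.norm_eq_abs]
  linarith [neg_abs_le (secondOrderTaylorRemainder φ x (y - x)),
    neg_abs_le (secondOrderTaylorRemainder φ x (-(y - x)))]

/-- `max φ + min φ − 2φ(x) ≥ ⟨D²φ(x)(x̄_ε−x), x̄_ε−x⟩ + o(ε²)` on closed balls,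
where `x̄_ε` is a minimizer of `φ` over `B̄_ε(x)`: the negative part of the
difference is `o(ε²)` as `ε → 0⁺`. -/
theorem minmax_second_order_estimate {N : ℕ}
    (Ω : Set (EuclideanSpace ℝ (Fin N))) (hΩ : IsOpen Ω)
    (φ : EuclideanSpace ℝ (Fin N) → ℝ) (hφ : ContDiffOn ℝ 2 φ Ω)
    (x : EuclideanSpace ℝ (Fin N)) (hx : x ∈ Ω)
    (ε₁ : ℝ) (hε₁ : 0 < ε₁) (hball : closedBall x ε₁ ⊆ Ω)
    (xb : ℝ → EuclideanSpace ℝ (Fin N))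
    (hxb : ∀ ε ∈ Set.Ioc (0:ℝ) ε₁, xb ε ∈ closedBall x ε ∧
      IsMinOn φ (closedBall x ε) (xb ε)) :
    (fun ε : ℝ => max ((iteratedFDeriv ℝ 2 φ x ![xb ε - x, xb ε - x])
        - (sSup (φ '' closedBall x ε) + sInf (φ '' closedBall x ε) - 2 * φ x)) 0)
      =o[𝓝[>] (0 : ℝ)] fun ε => ε ^ 2 := by
  have hR := (hφ.contDiffAt (hΩ.mem_nhds hx)).isLittleO_secondOrderTaylorRemainder
  have hsmall : ∀ᶠ ε in 𝓝[>] 0, ε ∈ Ioc 0 ε₁ := Ioc_mem_nhdsGT hε₁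
  have hnorm : ∀ᶠ ε in 𝓝[>] 0, ‖xb ε - x‖ ≤ ε :=
    hsmall.mono fun ε hε => by simpa [dist_eq_norm] using (hxb ε hε).1
  have hnorm_neg : ∀ᶠ ε in 𝓝[>] 0, ‖-(xb ε - x)‖ ≤ ε := by simpa only [norm_neg] using hnorm
  refine IsBigO.trans_isLittleO (IsBigO.of_norm_eventuallyLE ?_)
    ((hR.comp_of_norm_le_self hnorm).norm_left.add (hR.comp_of_norm_le_self hnorm_neg).norm_left)
  filter_upwards [hsmall] with ε hε
  obtain ⟨hy, hmin⟩ := hxb ε hε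
  have hbdd : BddAbove (φ '' closedBall x ε) := (isCompact_closedBall x ε).bddAbove_image
    (hφ.continuousOn.mono ((closedBall_subset_closedBall hε.2).trans hball))
  rw [Real.norm_of_nonneg (le_max_right _ _)]
  exact max_le (iteratedFDeriv_two_sub_csSup_add_csInf_le hy hmin hbdd) (by positivity)
end

section
/- There exists a bounded Borel set A ⊂ ℝ³ such that A + B̄₁(0) (the Minkowski sum of A with the closed unit ball) is not a Borel set. Consequently, for u = χ_A, ε = 1, δ = 1/3, no Borel measurable selection σ : ℝ³ → ℝ³ with σ(x) ∈ B̄₁(x) and u(σ(x)) ≥ sup_{B̄₁(x)} u − δ can be constructed via the set A + B̄₁(0); in particular the selection lemma with closed balls can fail. -/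
open MeasureTheory Metric Set Pointwise

/-!
Souslin's diagonal argument against a closed set universal for the closed subsets of
`ℕ^ℕ × ℕ^ℕ` gives a closed `C ⊆ ℕ^ℕ × ℕ^ℕ` whose projection `D` is not Borel. Embed `ℕ^ℕ`
Borel-injectively into `(-π/2, π/2)` by `ψ` and let `A` be the image of `C` under
`(x, y) ↦ (ψ x, cos ψ y, sin ψ y)`: a bounded Borel subset (Lusin–Souslin) of the unit cylinder
around the first axis. A point `(t, 0, 0)` of the axis is within distance `1` of
`(s, cos θ, sin θ)` only when `t = s`, so the axis meets `A + B̄₁(0)` exactly in `ψ(D)`, which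
is not Borel. A Borel selection `σ` as in the statement would give `A + B̄₁(0) = σ⁻¹(A)`.
-/

open TopologicalSpace Real

section UniversalClosedSet

variable {Y : Type*} [TopologicalSpace Y]

/-- The section at `c` is the complement of `⋃ {b n | c n ≠ 0}`. -/
def universalClosedSet (b : ℕ → Set Y) : Set ((ℕ → ℕ) × Y) :=
  {p | ∀ n, p.1 n ≠ 0 → p.2 ∉ b n}

theorem isClosed_universalClosedSet {b : ℕ → Set Y} (hb : ∀ n, IsOpen (b n)) :
    IsClosed (universalClosedSet b) := by
  have : universalClosedSet b = ⋂ n, ({p : (ℕ → ℕ) × Y | p.1 n = 0} ∪ (Prod.snd ⁻¹' b n)ᶜ) := by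
    ext p
    simp only [universalClosedSet, mem_ofPred_eq, mem_iInter, mem_union, mem_compl_iff,
      mem_preimage, or_iff_not_imp_left]
  rw [this]
  exact isClosed_iInter fun n => (isClosed_eq (by fun_prop) continuous_const).union
    ((hb n).preimage continuous_snd).isClosed_compl

theorem exists_preimage_universalClosedSet_eq {b : ℕ → Set Y} (hb : IsTopologicalBasis (range b))
    {C : Set Y} (hC : IsClosed C) : ∃ c, Prod.mk c ⁻¹' universalClosedSet b = C := by
  classical
  refine ⟨fun n => if Disjoint (b n) C then 1 else 0, Subset.antisymm ?_ ?_⟩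
  · intro y hy
    by_contra hyC
    obtain ⟨_, ⟨n, rfl⟩, hyn, hnC⟩ := hb.exists_subset_of_mem_open hyC hC.isOpen_compl
    exact hy n (by simp [disjoint_left.2 hnC]) hyn
  · intro y hyC n hn hyn
    have hdisj : Disjoint (b n) C := by simpa using hn
    exact hdisj.notMem_of_mem_left hyn hyC

end UniversalClosedSet

theorem MeasureTheory.AnalyticSet.exists_isClosed_image_fst {α : Type*} [TopologicalSpace α]
    [T2Space α] {s : Set α} (hs : AnalyticSet s) :
    ∃ C : Set (α × (ℕ → ℕ)), IsClosed C ∧ Prod.fst '' C = s := by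
  rw [AnalyticSet] at hs
  rcases hs with rfl | ⟨f, hf, rfl⟩
  · exact ⟨∅, isClosed_empty, image_empty _⟩
  · refine ⟨{q | q.1 = f q.2}, isClosed_eq continuous_fst (hf.comp continuous_snd), ?_⟩
    ext x
    simp [eq_comm]

theorem exists_isClosed_image_fst_not_measurableSet :
    ∃ C : Set ((ℕ → ℕ) × (ℕ → ℕ)), IsClosed C ∧ ¬ MeasurableSet (Prod.fst '' C) := by
  obtain ⟨b, hb⟩ := exists_seq_basis ((ℕ → ℕ) × (ℕ → ℕ))
  have hU := isClosed_universalClosedSet fun n => hb.isOpen (mem_range_self n)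
  refine ⟨(fun q => (q.1, q)) ⁻¹' universalClosedSet b, hU.preimage (by fun_prop), fun hD => ?_⟩
  -- `Dᶜ` is analytic, hence coded by some `c`; at `c` the diagonal set `D` contradicts itself.
  obtain ⟨C, hC, hCD⟩ := hD.compl.analyticSet.exists_isClosed_image_fst
  obtain ⟨c, hc⟩ := exists_preimage_universalClosedSet_eq hb hC
  have hdiag : c ∈ Prod.fst '' ((fun q => (q.1, q)) ⁻¹' universalClosedSet b) ↔
      c ∈ Prod.fst '' C := by
    simp only [← hc, mem_image, mem_preimage, Prod.exists, exists_and_right, exists_eq_right]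
  rw [hCD] at hdiag
  exact iff_not_self hdiag

theorem exists_measurable_injective_mem_Ioo (α : Type*) [MeasurableSpace α]
    [StandardBorelSpace α] :
    ∃ ψ : α → ℝ, Measurable ψ ∧ Function.Injective ψ ∧ ∀ x, ψ x ∈ Ioo (-(π / 2)) (π / 2) := by
  obtain ⟨f, hf⟩ := exists_measurableEmbedding_real α
  exact ⟨arctan ∘ f, continuous_arctan.measurable.comp hf.measurable,
    arctan_injective.comp hf.injective, fun x => arctan_mem_Ioo (f x)⟩

section Cylinder

noncomputable def xAxis (t : ℝ) : EuclideanSpace ℝ (Fin 3) := !₂[t, 0, 0]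

noncomputable def cylinderMap (p : ℝ × ℝ) : EuclideanSpace ℝ (Fin 3) :=
  !₂[p.1, cos p.2, sin p.2]

theorem continuous_xAxis : Continuous xAxis := by
  unfold xAxis
  fun_prop

theorem continuous_cylinderMap : Continuous cylinderMap := by
  unfold cylinderMap
  fun_prop

theorem injOn_cylinderMap : InjOn cylinderMap (univ ×ˢ Icc (-(π / 2)) (π / 2)) := by
  rintro ⟨s, θ⟩ ⟨-, hθ⟩ ⟨s', θ'⟩ ⟨-, hθ'⟩ h
  have h0 := congrArg (· 0) h
  have h2 := congrArg (· 2) h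
  simp only [cylinderMap, PiLp.toLp_apply, Matrix.cons_val] at h0 h2
  exact Prod.ext h0 (injOn_sin hθ hθ' h2)

theorem dist_xAxis_cylinderMap (t : ℝ) (p : ℝ × ℝ) :
    dist (xAxis t) (cylinderMap p) = √((t - p.1) ^ 2 + 1) := by
  rw [EuclideanSpace.dist_eq, Fin.sum_univ_three]
  simp only [xAxis, cylinderMap, Matrix.cons_val_zero, Matrix.cons_val_one, Matrix.cons_val,
    Real.dist_eq, sq_abs, zero_sub, abs_neg]
  rw [add_assoc, cos_sq_add_sin_sq]

theorem dist_xAxis_cylinderMap_le_one_iff {t : ℝ} {p : ℝ × ℝ} :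
    dist (xAxis t) (cylinderMap p) ≤ 1 ↔ t = p.1 := by
  rw [dist_xAxis_cylinderMap, Real.sqrt_le_one, add_le_iff_nonpos_left, sq_nonpos_iff,
    sub_eq_zero]

end Cylinder

theorem mem_add_closedBall_zero_iff {E : Type*} [SeminormedAddCommGroup E] {s : Set E} {x : E}
    {r : ℝ} : x ∈ s + closedBall 0 r ↔ ∃ a ∈ s, dist x a ≤ r := by
  simp only [mem_add, mem_closedBall_zero_iff]
  constructor
  · rintro ⟨a, ha, b, hb, rfl⟩
    exact ⟨a, ha, by simpa [dist_eq_norm] using hb⟩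
  · rintro ⟨a, ha, h⟩
    exact ⟨a, ha, x - a, by rwa [← dist_eq_norm], add_sub_cancel a x⟩

theorem xAxis_preimage_image_cylinderMap_add_closedBall (S : Set (ℝ × ℝ)) :
    xAxis ⁻¹' (cylinderMap '' S + closedBall 0 1) = Prod.fst '' S := by
  ext t
  rw [mem_preimage, mem_add_closedBall_zero_iff, exists_mem_image]
  simp only [dist_xAxis_cylinderMap_le_one_iff, mem_image, eq_comm]

theorem preimage_eq_add_closedBall_of_forall_sSup_sub_le {E : Type*} [SeminormedAddCommGroup E]
    {A : Set E} {r δ : ℝ} (hδ : δ < 1) {σ : E → E}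
    (hσ : ∀ x, σ x ∈ closedBall x r ∧
      sSup (A.indicator (fun _ => (1:ℝ)) '' closedBall x r) - δ ≤ A.indicator (fun _ => 1) (σ x)) :
    σ ⁻¹' A = A + closedBall 0 r := by
  ext x
  rw [mem_preimage, mem_add_closedBall_zero_iff]
  constructor
  · intro hx
    exact ⟨σ x, hx, dist_comm x (σ x) ▸ (hσ x).1⟩
  · rintro ⟨a, ha, hxa⟩
    by_contra hx
    have hbdd : BddAbove (A.indicator (fun _ => (1:ℝ)) '' closedBall x r) := by
      refine ⟨1, forall_mem_image.2 fun y _ => ?_⟩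
      by_cases hy : y ∈ A <;> simp [hy]
    have hsup := le_csSup hbdd ⟨a, mem_closedBall'.2 hxa, indicator_of_mem ha _⟩
    have hσx := (hσ x).2
    rw [indicator_of_notMem hx] at hσx
    linarith

/-- There is a bounded Borel set `A ⊂ ℝ³` whose Minkowski sum with the closed
unit ball is not Borel; consequently there is no Borel `(1/3)`-optimal
sup-selection for `χ_A` with the closed-ball constraint. -/
theorem exists_borel_set_closedBall_sum_not_borel :
    ∃ A : Set (EuclideanSpace ℝ (Fin 3)),
      MeasurableSet A ∧ Bornology.IsBounded A ∧
      ¬ MeasurableSet (A + closedBall (0 : EuclideanSpace ℝ (Fin 3)) 1) ∧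
      ¬ ∃ σ : EuclideanSpace ℝ (Fin 3) → EuclideanSpace ℝ (Fin 3),
          Measurable σ ∧ ∀ x, σ x ∈ closedBall x 1 ∧
            sSup ((A.indicator (fun _ => (1:ℝ))) '' closedBall x 1) - 1/3
              ≤ A.indicator (fun _ => (1:ℝ)) (σ x) := by
  obtain ⟨C, hC, hD⟩ := exists_isClosed_image_fst_not_measurableSet
  obtain ⟨ψ, hψm, hψi, hψ⟩ := exists_measurable_injective_mem_Ioo (ℕ → ℕ)
  have hψC : Prod.map ψ ψ '' C ⊆ Icc (-(π / 2)) (π / 2) ×ˢ Icc (-(π / 2)) (π / 2) := by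
    rintro _ ⟨q, -, rfl⟩
    exact ⟨Ioo_subset_Icc_self (hψ q.1), Ioo_subset_Icc_self (hψ q.2)⟩
  have hA : MeasurableSet (cylinderMap '' (Prod.map ψ ψ '' C)) := by
    have hinj : InjOn cylinderMap (Prod.map ψ ψ '' C) :=
      injOn_cylinderMap.mono fun p hp => mem_prod.2 ⟨mem_univ _, (hψC hp).2⟩
    rw [image_image]
    exact hC.measurableSet.image_of_measurable_injOn
      (continuous_cylinderMap.measurable.comp (hψm.prodMap hψm))
      (hinj.comp (hψi.prodMap hψi).injOn (mapsTo_image _ _))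
  have hAsum : ¬ MeasurableSet (cylinderMap '' (Prod.map ψ ψ '' C) + closedBall 0 1) := by
    intro h
    have hfst : Prod.fst '' (Prod.map ψ ψ '' C) = ψ '' (Prod.fst '' C) := by
      simp only [image_image, Prod.map_fst]
    have hline := h.preimage continuous_xAxis.measurable
    rw [xAxis_preimage_image_cylinderMap_add_closedBall, hfst] at hline
    exact hD (preimage_image_eq (Prod.fst '' C) hψi ▸ hψm hline)
  refine ⟨_, hA, ?_, hAsum, ?_⟩
  · exact ((isCompact_Icc.prod isCompact_Icc).image continuous_cylinderMap).isBounded.subset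
      (image_mono hψC)
  · rintro ⟨σ, hσm, hσ⟩
    rw [← preimage_eq_add_closedBall_of_forall_sSup_sub_le (by norm_num) hσ] at hAsum
    exact hAsum (hσm hA)
end
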